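/- arXiv:math/0311189 — 2 statements merged into one kernel-verified Lean document; each statement's English description precedes it below -/
import Mathlib

section
/- Let $(a_n)_{n\ge 1}$ be a sequence of nonnegative reals with $a_n = O(e^{-\gamma\sqrt{n}})$ for some $\gamma>0$. Then there exists $D>0$ such that the sequence $b_n = a_n/D$ satisfies: $u_n := \sum_{i=0}^{n} \sum_{j_1+\dots+j_i=n,\ j_1,\dots,j_i>0} b_{j_1}\cdots b_{j_i} = O(n^2 e^{-\gamma\sqrt{n}})$. -/
open Real Finset

/-- `i`-fold convolution power of a sequence indexed by positive integers:
`(convPow b i) n = ∑_{j₁+⋯+jᵢ = n, jₖ > 0} b_{j₁} ⋯ b_{jᵢ}`. -/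
def convPow (b : ℕ → ℝ) : ℕ → ℕ → ℝ
  | 0, n => if n = 0 then 1 else 0
  | i + 1, n => ∑ k ∈ Finset.Icc 1 n, b k * convPow b i (n - k)

lemma convPow_zero' (b : ℕ → ℝ) (n : ℕ) : convPow b 0 n = if n = 0 then 1 else 0 := rfl
lemma convPow_succ' (b : ℕ → ℝ) (i n : ℕ) :
    convPow b (i+1) n = ∑ k ∈ Finset.Icc 1 n, b k * convPow b i (n - k) := rfl

lemma convPow_eq_zero' (b : ℕ → ℝ) : ∀ i n : ℕ, n < i → convPow b i n = 0 := by
  intro i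
  induction i with
  | zero => intro n h; omega
  | succ i ih =>
    intro n h
    rw [convPow_succ']
    apply Finset.sum_eq_zero
    intro k hk
    rw [Finset.mem_Icc] at hk
    rw [ih (n - k) (by omega), mul_zero]

lemma u_rec' (b : ℕ → ℝ) (n : ℕ) (hn : 1 ≤ n) :
    ∑ i ∈ Finset.range (n+1), convPow b i n
      = ∑ k ∈ Finset.Icc 1 n, b k * ∑ i ∈ Finset.range (n-k+1), convPow b i (n-k) := by
  rw [Finset.sum_range_succ', convPow_zero', if_neg (by omega), add_zero]
  simp only [convPow_succ']
  rw [Finset.sum_comm]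
  apply Finset.sum_congr rfl
  intro k hk
  rw [Finset.mem_Icc] at hk
  rw [← Finset.mul_sum]
  congr 1
  refine (Finset.sum_subset ?_ ?_).symm
  · intro i hi; rw [Finset.mem_range] at *; omega
  · intro i hi hni
    rw [Finset.mem_range] at *
    exact convPow_eq_zero' b i (n-k) (by omega)

lemma sqrt_add_le_of_le' (x y : ℝ) (hx : 0 ≤ x) (hxy : x ≤ y) :
    Real.sqrt (x + y) ≤ Real.sqrt x / 2 + Real.sqrt y := by
  have hy : 0 ≤ y := hx.trans hxy
  have h1 := Real.sq_sqrt hx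
  have h2 := Real.sq_sqrt hy
  have h3 : Real.sqrt x ≤ Real.sqrt y := Real.sqrt_le_sqrt hxy
  have h4 := Real.sqrt_nonneg x
  have h5 := Real.sqrt_nonneg y
  have hs : 0 ≤ Real.sqrt x / 2 + Real.sqrt y := by positivity
  have hle : x + y ≤ (Real.sqrt x / 2 + Real.sqrt y)^2 := by
    nlinarith [mul_le_mul_of_nonneg_left h3 h4]
  calc Real.sqrt (x+y) ≤ Real.sqrt ((Real.sqrt x / 2 + Real.sqrt y)^2) := Real.sqrt_le_sqrt hle
    _ = _ := Real.sqrt_sq hs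

lemma exp_pow_bound' (t : ℝ) (ht : 0 < t) : Real.exp (-t) ≤ 256 / t^4 := by
  have h1 : t/4 ≤ Real.exp (t/4) := by
    have := Real.add_one_le_exp (t/4); linarith
  have h2 : (t/4)^4 ≤ Real.exp (t/4)^4 := pow_le_pow_left₀ (by positivity) h1 4
  have h3 : Real.exp (t/4)^4 = Real.exp t := by
    rw [← Real.exp_nat_mul]; norm_num; ring_nf
  rw [h3] at h2
  rw [Real.exp_neg]
  have h4 : (Real.exp t)⁻¹ ≤ ((t/4)^4)⁻¹ := by
    apply inv_anti₀ (by positivity) h2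
  refine h4.trans (le_of_eq ?_)
  field_simp
  ring

lemma exp_neg_half_sqrt_le' (γ : ℝ) (hγ : 0 < γ) (m : ℕ) (hm : 1 ≤ m) :
    Real.exp (-(γ/2 * Real.sqrt m)) ≤ 4096/γ^4 * (1/(m:ℝ)^2) := by
  have hm' : (1:ℝ) ≤ m := by exact_mod_cast hm
  have hs : 0 < Real.sqrt m := Real.sqrt_pos.2 (by linarith)
  have ht : 0 < γ/2 * Real.sqrt m := by positivity
  refine (exp_pow_bound' _ ht).trans ?_
  have hsq : (Real.sqrt m)^2 = (m:ℝ) := Real.sq_sqrt (by linarith)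
  have heq : (γ/2 * Real.sqrt m)^4 = γ^4/16 * (m:ℝ)^2 := by
    have h4 : (Real.sqrt m)^4 = ((Real.sqrt m)^2)^2 := by ring
    rw [mul_pow, h4, hsq]; ring
  rw [heq]
  have hm0 : (m:ℝ) ≠ 0 := by positivity
  have hg0 : γ ≠ 0 := ne_of_gt hγ
  apply le_of_eq
  field_simp
  ring

lemma cross_half' (γ : ℝ) (hγ : 0 < γ) (k j : ℕ) (hk : 1 ≤ k) (hkj : k ≤ j) :
    Real.exp (-γ * Real.sqrt k) * Real.exp (-γ * Real.sqrt j)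
      ≤ Real.exp (-γ * Real.sqrt ((k:ℝ)+(j:ℝ))) * (4096/γ^4 * (1/(k:ℝ)^2)) := by
  rw [← Real.exp_add]
  have hsq := sqrt_add_le_of_le' (k:ℝ) (j:ℝ) (by positivity) (by exact_mod_cast hkj)
  have h1 : -γ * Real.sqrt k + -γ * Real.sqrt j
      ≤ -γ * Real.sqrt ((k:ℝ)+(j:ℝ)) + -(γ/2 * Real.sqrt k) := by
    nlinarith [mul_le_mul_of_nonneg_left hsq hγ.le]
  calc Real.exp (-γ * Real.sqrt k + -γ * Real.sqrt j)
      ≤ Real.exp (-γ * Real.sqrt ((k:ℝ)+(j:ℝ)) + -(γ/2 * Real.sqrt k)) := Real.exp_le_exp.2 h1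
    _ = Real.exp (-γ * Real.sqrt ((k:ℝ)+(j:ℝ))) * Real.exp (-(γ/2 * Real.sqrt k)) :=
        Real.exp_add _ _
    _ ≤ _ := mul_le_mul_of_nonneg_left (exp_neg_half_sqrt_le' γ hγ k hk) (Real.exp_pos _).le

lemma cross' (γ : ℝ) (hγ : 0 < γ) (k j : ℕ) (hk : 1 ≤ k) (hj : 1 ≤ j) :
    Real.exp (-γ * Real.sqrt k) * Real.exp (-γ * Real.sqrt j)
      ≤ Real.exp (-γ * Real.sqrt ((k:ℝ)+(j:ℝ))) * (4096/γ^4 * (1/(k:ℝ)^2 + 1/(j:ℝ)^2)) := by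
  have hE : (0:ℝ) < 4096/γ^4 := by positivity
  have h1 : (0:ℝ) ≤ 1/(k:ℝ)^2 := by positivity
  have h2 : (0:ℝ) ≤ 1/(j:ℝ)^2 := by positivity
  have he := (Real.exp_pos (-γ * Real.sqrt ((k:ℝ)+(j:ℝ)))).le
  rcases le_total k j with h | h
  · refine (cross_half' γ hγ k j hk h).trans ?_
    apply mul_le_mul_of_nonneg_left _ he
    apply mul_le_mul_of_nonneg_left _ hE.le
    linarith
  · have := cross_half' γ hγ j k hj h
    rw [mul_comm (Real.exp (-γ * Real.sqrt (j:ℝ)))] at this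
    have hc : (j:ℝ) + (k:ℝ) = (k:ℝ) + (j:ℝ) := by ring
    rw [hc] at this
    refine this.trans ?_
    apply mul_le_mul_of_nonneg_left _ he
    apply mul_le_mul_of_nonneg_left _ hE.le
    linarith

lemma sum_inv_sq_le' (m : ℕ) : ∑ k ∈ Finset.Icc 1 m, (1:ℝ)/(k:ℝ)^2 ≤ 2 := by
  have h : ∀ m : ℕ, 1 ≤ m → ∑ k ∈ Finset.Icc 1 m, (1:ℝ)/(k:ℝ)^2 ≤ 2 - 1/(m:ℝ) := by
    intro m hm
    induction m with
    | zero => omega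
    | succ m ih =>
      rcases Nat.eq_or_lt_of_le hm with h1 | h1
      · simp [← h1]; norm_num
      · have hm1 : 1 ≤ m := by omega
        rw [Finset.sum_Icc_succ_top (by omega : 1 ≤ m+1)]
        have hmr : (1:ℝ) ≤ (m:ℝ) := by exact_mod_cast hm1
        have key : (1:ℝ)/((m:ℝ)+1)^2 ≤ 1/(m:ℝ) - 1/((m:ℝ)+1) := by
          rw [div_sub_div _ _ (by positivity) (by positivity)]
          rw [div_le_div_iff₀ (by positivity) (by positivity)]
          ring_nf
          nlinarith
        have := ih hm1
        push_cast
        push_cast at this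
        linarith
  rcases Nat.eq_zero_or_pos m with h0 | h0
  · simp [h0]
  · have hmr : (0:ℝ) < (m:ℝ) := by exact_mod_cast h0
    have h1 : (0:ℝ) < 1/(m:ℝ) := by positivity
    linarith [h m h0]

lemma sum_reflect' (m : ℕ) (f : ℕ → ℝ) :
    ∑ k ∈ Finset.Icc 1 m, f (m+1-k) = ∑ k ∈ Finset.Icc 1 m, f k := by
  refine Finset.sum_nbij' (fun k => m+1-k) (fun k => m+1-k) ?_ ?_ ?_ ?_ ?_ <;>
    intro k hk <;> simp only [Finset.mem_Icc] at hk ⊢ <;> first | omega | (congr 1; omega)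


/-- If `aₙ = O(e^{-γ√n})` is nonnegative, then for some `D > 0` the sequence `bₙ = aₙ/D`
satisfies `uₙ = ∑_{i=0}^n ∑_{j₁+⋯+jᵢ=n} b_{j₁}⋯b_{jᵢ} = O(n² e^{-γ√n})`. -/
theorem stmt0 (γ : ℝ) (hγ : 0 < γ) (a : ℕ → ℝ) (ha : ∀ n, 0 ≤ a n)
    (C : ℝ) (hC : ∀ n, 1 ≤ n → a n ≤ C * Real.exp (-γ * Real.sqrt n)) :
    ∃ D > 0, ∃ K > 0, ∀ n, 1 ≤ n →
      (∑ i ∈ Finset.range (n + 1), convPow (fun m => a m / D) i n)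
        ≤ K * (n : ℝ) ^ 2 * Real.exp (-γ * Real.sqrt n) := by

  have hC0 : 0 ≤ C := by
    have h1 := ha 1
    have h2 := hC 1 le_rfl
    have h3 := Real.exp_pos (-γ * Real.sqrt ((1:ℕ):ℝ))
    nlinarith
  set E : ℝ := 4096/γ^4 with hEdef
  have hE : 0 < E := by positivity
  set D : ℝ := (C+1)*(1+4*E) with hDdef
  have hD : 0 < D := mul_pos (by linarith) (by linarith)
  have hfrac : C/D*(1+4*E) ≤ 1 := by
    rw [div_mul_eq_mul_div, div_le_one hD, hDdef]
    nlinarith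
  have hCD : 0 ≤ C/D := div_nonneg hC0 hD.le
  have hb : ∀ k : ℕ, 1 ≤ k → a k / D ≤ C/D * Real.exp (-γ * Real.sqrt k) := by
    intro k hk
    calc a k / D ≤ C * Real.exp (-γ * Real.sqrt k) / D :=
          (div_le_div_iff_of_pos_right hD).2 (hC k hk)
      _ = C/D * Real.exp (-γ * Real.sqrt k) := by ring
  have hb0 : ∀ k : ℕ, 0 ≤ a k / D := fun k => div_nonneg (ha k) hD.le
  refine ⟨D, hD, 1, one_pos, ?_⟩
  intro n hn
  rw [one_mul]
  induction n using Nat.strong_induction_on with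
  | _ n ih =>
  rw [u_rec' _ n hn]
  obtain ⟨m, rfl⟩ : ∃ m, n = m + 1 := ⟨n-1, by omega⟩
  rw [Finset.sum_Icc_succ_top (by omega : 1 ≤ m+1)]
  simp only [Nat.sub_self]
  have hU0 : (∑ i ∈ Finset.range (0+1), convPow (fun m => a m / D) i 0) = 1 := by
    rw [Finset.sum_range_one, convPow_zero', if_pos rfl]
  rw [hU0, mul_one]
  set N : ℝ := ((m+1:ℕ):ℝ) with hNdef
  have hN1 : (1:ℝ) ≤ N := by rw [hNdef]; exact_mod_cast Nat.le_add_left 1 m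
  set X : ℝ := Real.exp (-γ * Real.sqrt ((m+1:ℕ):ℝ)) with hXdef
  have hX : 0 < X := Real.exp_pos _
  have hterm : ∀ k ∈ Finset.Icc 1 m,
      (a k / D) * (∑ i ∈ Finset.range ((m+1-k)+1), convPow (fun m => a m / D) i (m+1-k))
        ≤ C/D * N^2 * X * (E * (1/(k:ℝ)^2 + 1/((m+1-k : ℕ):ℝ)^2)) := by
    intro k hk
    rw [Finset.mem_Icc] at hk
    set j := m + 1 - k with hj
    have hj1 : 1 ≤ j := by omega
    have hjlt : j < m + 1 := by omega
    have hU := ih j hjlt hj1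
    have hjN : ((j:ℕ):ℝ) ≤ N := by rw [hNdef]; exact_mod_cast Nat.le_of_lt_succ (by omega)
    have hcast : (k:ℝ) + (j:ℝ) = ((m+1:ℕ):ℝ) := by
      have h : k + j = m + 1 := by omega
      exact_mod_cast h
    have hcr := cross' γ hγ k j hk.1 hj1
    rw [hcast] at hcr
    calc (a k / D) * (∑ i ∈ Finset.range (j+1), convPow (fun m => a m / D) i j)
        ≤ (a k / D) * ((j:ℝ)^2 * Real.exp (-γ * Real.sqrt (j:ℝ))) :=
          mul_le_mul_of_nonneg_left hU (hb0 k)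
      _ ≤ (C/D * Real.exp (-γ * Real.sqrt (k:ℝ))) * ((j:ℝ)^2 * Real.exp (-γ * Real.sqrt (j:ℝ))) := by
          apply mul_le_mul_of_nonneg_right (hb k hk.1) (by positivity)
      _ = (C/D * (j:ℝ)^2) * (Real.exp (-γ * Real.sqrt (k:ℝ)) * Real.exp (-γ * Real.sqrt (j:ℝ))) := by
          ring
      _ ≤ (C/D * N^2) * (X * (E * (1/(k:ℝ)^2 + 1/(j:ℝ)^2))) := by
          have hjsq : (j:ℝ)^2 ≤ N^2 := by nlinarith [(Nat.cast_nonneg j : (0:ℝ) ≤ (j:ℝ)), hjN]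
          have hA : C/D * (j:ℝ)^2 ≤ C/D * N^2 := mul_le_mul_of_nonneg_left hjsq hCD
          exact mul_le_mul hA hcr (by positivity) (by positivity)
      _ = C/D * N^2 * X * (E * (1/(k:ℝ)^2 + 1/(j:ℝ)^2)) := by ring
  have hsum := Finset.sum_le_sum hterm
  have htop : a (m+1) / D ≤ C/D * X := hb (m+1) (by omega)
  have hsum2 : ∑ k ∈ Finset.Icc 1 m,
      C/D * N^2 * X * (E * (1/(k:ℝ)^2 + 1/((m+1-k : ℕ):ℝ)^2))
      ≤ C/D * N^2 * X * (E * 4) := by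
    rw [← Finset.mul_sum]
    apply mul_le_mul_of_nonneg_left _ (by positivity)
    rw [← Finset.mul_sum]
    apply mul_le_mul_of_nonneg_left _ hE.le
    rw [Finset.sum_add_distrib]
    have hr : ∑ k ∈ Finset.Icc 1 m, (1:ℝ)/((m+1-k : ℕ):ℝ)^2
        = ∑ k ∈ Finset.Icc 1 m, (1:ℝ)/(k:ℝ)^2 := sum_reflect' m (fun k => (1:ℝ)/(k:ℝ)^2)
    rw [hr]
    linarith [sum_inv_sq_le' m]
  have hfinal : C/D * N^2 * X * (E * 4) + C/D * X ≤ N^2 * X := by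
    have hN2 : (1:ℝ) ≤ N^2 := by nlinarith
    have h1 : C/D * X ≤ C/D * N^2 * X := by
      have h := mul_le_mul_of_nonneg_left hN2 (mul_nonneg hCD hX.le)
      nlinarith [h]
    have h2 : C/D * N^2 * X * (E * 4) + C/D * N^2 * X = (C/D*(1+4*E)) * (N^2 * X) := by ring
    have h3 : (C/D*(1+4*E)) * (N^2 * X) ≤ 1 * (N^2 * X) := by
      apply mul_le_mul_of_nonneg_right hfrac (by positivity)
    nlinarith
  calc _ ≤ C/D * N^2 * X * (E * 4) + C/D * X := by
        exact add_le_add (hsum.trans hsum2) htop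
    _ ≤ N^2 * X := hfinal
end

section
/- Let $a_n \le C e^{-\gamma \sqrt{n}}$ for all $n \ge 1$, with $C,\gamma > 0$. Then there exist $D > 0$ (independent of $\delta$) and, for each $\delta > 0$ with $D^{\delta} e^{-\gamma} < 1$, a constant $S$ and $\gamma' > 0$ such that for all $n$: $\sum_{i \le \delta\sqrt{n}} \sum_{j_1+\dots+j_i \ge n,\ j_k>0} a_{j_1}\cdots a_{j_i} \le S e^{-\gamma'\sqrt{n}}$. -/
/-!
Split the decay evenly: `aⱼ ≤ (C e^{-γ√j/2}) · e^{-γ√j/2}`. Since `√` is subadditive, a tuple with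
`j₁ + ⋯ + jᵢ ≥ n` has `∏ₖ e^{-γ√jₖ/2} ≤ e^{-γ√n/2}`, while the remaining weights `C e^{-γ√j/2}`
are summable with sum at most some `K ≥ 1`. Summing over all tuples, the `i`-th term is at most
`e^{-γ√n/2} Kⁱ`, so the whole sum is at most `δ√n · e^{-(γ/2 - δ log K)√n}`. With `D = K²` the
condition `D^δ e^{-γ} < 1` says exactly `δ log K < γ/2`, so this decays like `e^{-γ'√n}`.
-/

open Real Finset
open scoped ENNReal

lemma Real.sqrt_sum_le_sum_sqrt {ι : Type*} (s : Finset ι) {f : ι → ℝ} (hf : ∀ i ∈ s, 0 ≤ f i) :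
    √(∑ i ∈ s, f i) ≤ ∑ i ∈ s, √(f i) := by
  rw [sqrt_le_left (sum_nonneg fun i _ => sqrt_nonneg _)]
  calc ∑ i ∈ s, f i = ∑ i ∈ s, √(f i) ^ 2 := sum_congr rfl fun i hi => (sq_sqrt (hf i hi)).symm
    _ ≤ (∑ i ∈ s, √(f i)) ^ 2 := sum_sq_le_sq_sum_of_nonneg fun i _ => sqrt_nonneg _

lemma Real.prod_exp_neg_mul_sqrt_le {ι : Type*} (s : Finset ι) {c : ℝ} (hc : 0 ≤ c)
    {j : ι → ℕ} {n : ℕ} (hn : n ≤ ∑ k ∈ s, j k) :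
    ∏ k ∈ s, exp (-c * √(j k)) ≤ exp (-c * √n) := by
  rw [← exp_sum, exp_le_exp, ← mul_sum, neg_mul, neg_mul, neg_le_neg_iff]
  gcongr
  calc √n ≤ √(∑ k ∈ s, (j k : ℝ)) := sqrt_le_sqrt (by exact_mod_cast hn)
    _ ≤ ∑ k ∈ s, √(j k) := sqrt_sum_le_sum_sqrt s fun k _ => by positivity

lemma Real.summable_exp_neg_mul_sqrt {c : ℝ} (hc : 0 < c) :
    Summable fun m : ℕ => exp (-c * √m) := by
  have h := (isLittleO_exp_neg_mul_rpow_atTop hc (-4)).comp_tendsto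
    (tendsto_sqrt_atTop.comp tendsto_natCast_atTop_atTop)
  refine summable_of_isBigO_nat' (summable_nat_rpow.mpr (by norm_num : (-2 : ℝ) < -1))
    (h.isBigO.congr_right fun m => ?_)
  simp only [Function.comp_apply]
  rw [sqrt_eq_rpow, ← rpow_mul m.cast_nonneg]
  norm_num

lemma Real.mul_exp_neg_mul_le {β : ℝ} (hβ : 0 < β) (x : ℝ) :
    x * exp (-β * x) ≤ 2 / β * exp (-(β / 2) * x) := by
  have hx : x ≤ 2 / β * exp (β / 2 * x) := by
    have := add_one_le_exp (β / 2 * x)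
    rw [div_mul_eq_mul_div, le_div_iff₀ hβ]
    linarith
  calc x * exp (-β * x) ≤ 2 / β * exp (β / 2 * x) * exp (-β * x) := by gcongr
    _ = 2 / β * exp (-(β / 2) * x) := by rw [mul_assoc, ← exp_add]; ring_nf

lemma Real.natFloor_mul_exp_mul_pow_le {K δ c x : ℝ} (hK : 1 ≤ K) (hδ : 0 ≤ δ) (hx : 0 ≤ x)
    (hβ : 0 < c - δ * log K) :
    (⌊δ * x⌋₊ : ℝ) * (exp (-c * x) * K ^ ⌊δ * x⌋₊)
      ≤ 2 * δ / (c - δ * log K) * exp (-((c - δ * log K) / 2) * x) := by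
  set N := ⌊δ * x⌋₊
  have hN : (N : ℝ) ≤ δ * x := Nat.floor_le (by positivity)
  have hKN : K ^ N ≤ exp (δ * x * log K) :=
    calc K ^ N = exp (N * log K) := by rw [exp_nat_mul, exp_log (by positivity)]
      _ ≤ exp (δ * x * log K) := by gcongr; exact log_nonneg hK
  calc (N : ℝ) * (exp (-c * x) * K ^ N) ≤ δ * x * (exp (-c * x) * exp (δ * x * log K)) := by
        gcongr
    _ = δ * (x * exp (-(c - δ * log K) * x)) := by rw [← exp_add]; ring_nf
    _ ≤ δ * (2 / (c - δ * log K) * exp (-((c - δ * log K) / 2) * x)) :=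
        mul_le_mul_of_nonneg_left (mul_exp_neg_mul_le hβ x) hδ
    _ = _ := by ring

lemma Real.mul_log_lt_of_rpow_mul_exp_neg_lt_one {K δ γ : ℝ} (hK : 0 < K)
    (h : (K ^ 2) ^ δ * exp (-γ) < 1) : δ * log K < γ / 2 := by
  rw [rpow_def_of_pos (by positivity), log_pow, ← exp_add, exp_lt_one_iff] at h
  push_cast at h
  linarith

lemma ENNReal.tsum_pi_fin_prod {α : Type*} (g : α → ℝ≥0∞) (i : ℕ) :
    ∑' j : Fin i → α, ∏ k, g (j k) = (∑' m, g m) ^ i := by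
  induction i with
  | zero => simp
  | succ i ih =>
    rw [← (Fin.consEquiv fun _ => α).tsum_eq, ENNReal.tsum_prod', pow_succ', ← ih,
      ← ENNReal.tsum_mul_right]
    simp [Fin.prod_univ_succ, ENNReal.tsum_mul_left]

lemma ENNReal.sum_Icc_mul_pow_le {E K : ℝ} (hE : 0 ≤ E) (hK : 1 ≤ K) (N : ℕ) :
    ∑ i ∈ Icc 1 N, ENNReal.ofReal E * ENNReal.ofReal K ^ i
      ≤ ENNReal.ofReal (N * (E * K ^ N)) := by
  have hK' : 1 ≤ ENNReal.ofReal K := by simpa using ENNReal.ofReal_le_ofReal hK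
  calc ∑ i ∈ Icc 1 N, ENNReal.ofReal E * ENNReal.ofReal K ^ i
      ≤ ∑ i ∈ Icc 1 N, ENNReal.ofReal E * ENNReal.ofReal K ^ N :=
        sum_le_sum fun i hi => mul_le_mul_right (pow_le_pow_right₀ hK' (mem_Icc.1 hi).2) _
    _ = ENNReal.ofReal (N * (E * K ^ N)) := by
        rw [sum_const, Nat.card_Icc, nsmul_eq_mul, ENNReal.ofReal_mul (by positivity),
          ENNReal.ofReal_mul hE, ENNReal.ofReal_pow (by positivity), ENNReal.ofReal_natCast]
        simp

lemma tsum_ofReal_prod_of_le_sum_le {a b : ℕ → ℝ} {c : ℝ} (hc : 0 ≤ c) (ha : ∀ m, 0 ≤ a m)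
    (hab : ∀ m, 1 ≤ m → a m ≤ b m * exp (-c * √m)) (n i : ℕ) :
    ∑' j : {j : Fin i → ℕ // (∀ k, 0 < j k) ∧ n ≤ ∑ k, j k}, ENNReal.ofReal (∏ k, a (j.1 k))
      ≤ ENNReal.ofReal (exp (-c * √n)) * (∑' m, ENNReal.ofReal (b m)) ^ i := by
  have hterm : ∀ j : Fin i → ℕ, (∀ k, 0 < j k) → n ≤ ∑ k, j k →
      ENNReal.ofReal (∏ k, a (j k))
        ≤ ENNReal.ofReal (exp (-c * √n)) * ∏ k, ENNReal.ofReal (b (j k)) := by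
    intro j hpos hsum
    calc ENNReal.ofReal (∏ k, a (j k))
        ≤ ∏ k, ENNReal.ofReal (b (j k)) * ENNReal.ofReal (exp (-c * √(j k))) := by
          rw [ENNReal.ofReal_prod_of_nonneg fun k _ => ha (j k)]
          gcongr with k
          rw [← ENNReal.ofReal_mul' (exp_nonneg _)]
          exact ENNReal.ofReal_le_ofReal (hab _ (hpos k))
      _ ≤ ENNReal.ofReal (exp (-c * √n)) * ∏ k, ENNReal.ofReal (b (j k)) := by
          rw [prod_mul_distrib, mul_comm,
            ← ENNReal.ofReal_prod_of_nonneg fun k _ => exp_nonneg _]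
          gcongr
          exact prod_exp_neg_mul_sqrt_le univ hc hsum
  calc _ ≤ ∑' j : {j : Fin i → ℕ // (∀ k, 0 < j k) ∧ n ≤ ∑ k, j k},
          ENNReal.ofReal (exp (-c * √n)) * ∏ k, ENNReal.ofReal (b (j.1 k)) :=
        ENNReal.tsum_le_tsum fun j => hterm j.1 j.2.1 j.2.2
    _ ≤ ∑' j : Fin i → ℕ, ENNReal.ofReal (exp (-c * √n)) * ∏ k, ENNReal.ofReal (b (j k)) :=
        ENNReal.tsum_comp_le_tsum_of_injective Subtype.val_injective _
    _ = _ := by rw [ENNReal.tsum_mul_left, ENNReal.tsum_pi_fin_prod fun m => ENNReal.ofReal (b m)]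

/-- Key summation estimate: if `aₙ ≤ C e^{-γ√n}`, there is `D > 0` (independent of `δ`)
such that for every `δ > 0` with `D^δ e^{-γ} < 1`, the sum
`∑_{i ≤ δ√n} ∑_{j₁+⋯+jᵢ ≥ n, jₖ>0} a_{j₁}⋯a_{jᵢ}` is `≤ S e^{-γ'√n}` for some
`S` and `γ' > 0`. -/
theorem stmt5 (γ C : ℝ) (hγ : 0 < γ) (hC : 0 < C) (a : ℕ → ℝ) (ha : ∀ n, 0 ≤ a n)
    (hbound : ∀ n, 1 ≤ n → a n ≤ C * Real.exp (-γ * Real.sqrt n)) :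
    ∃ D > 0, ∀ δ > 0, D ^ δ * Real.exp (-γ) < 1 →
      ∃ (S : ℝ) (γ' : ℝ), 0 < γ' ∧ ∀ n : ℕ, 1 ≤ n →
        ∑ i ∈ Finset.Icc 1 ⌊δ * Real.sqrt n⌋₊,
            ∑' j : {j : Fin i → ℕ // (∀ k, 0 < j k) ∧ n ≤ ∑ k, j k},
              ENNReal.ofReal (∏ k : Fin i, a (j.1 k))
          ≤ ENNReal.ofReal (S * Real.exp (-γ' * Real.sqrt n)) := by
  set c := γ / 2
  have hc : 0 < c := by positivity
  set K := max (∑' m : ℕ, C * exp (-c * √m)) 1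
  have hK : 1 ≤ K := le_max_right _ _
  refine ⟨K ^ 2, by positivity, fun δ hδ hD => ?_⟩
  have hβ : 0 < c - δ * log K :=
    sub_pos.mpr (mul_log_lt_of_rpow_mul_exp_neg_lt_one (by positivity) hD)
  refine ⟨2 * δ / (c - δ * log K), (c - δ * log K) / 2, by positivity, fun n _ => ?_⟩
  have hab : ∀ m, 1 ≤ m → a m ≤ C * exp (-c * √m) * exp (-c * √m) := fun m hm => by
    rw [mul_assoc, ← exp_add]
    convert hbound m hm using 3
    ring
  have hM : ∑' m : ℕ, ENNReal.ofReal (C * exp (-c * √m)) ≤ ENNReal.ofReal K := by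
    rw [← ENNReal.ofReal_tsum_of_nonneg (fun m => by positivity)
      ((summable_exp_neg_mul_sqrt hc).mul_left C)]
    exact ENNReal.ofReal_le_ofReal (le_max_left _ _)
  calc _ ≤ ∑ i ∈ Icc 1 ⌊δ * √n⌋₊, ENNReal.ofReal (exp (-c * √n)) * ENNReal.ofReal K ^ i :=
        sum_le_sum fun i _ => (tsum_ofReal_prod_of_le_sum_le hc.le ha hab n i).trans (by gcongr)
    _ ≤ _ := ENNReal.sum_Icc_mul_pow_le (exp_nonneg _) hK _
    _ ≤ _ := ENNReal.ofReal_le_ofReal (natFloor_mul_exp_mul_pow_le hK hδ.le (sqrt_nonneg _) hβ)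
end
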